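/- Weiss Bridge Theorem: Let G be a torsion abelian group and φ: G → G an endomorphism; let K = Ĝ be the Pontryagin dual and ψ = φ̂: K → K the dual endomorphism. Then h_alg(φ) = h_top(ψ). -/

import Mathlib

/-!
Annihilators `F ↦ F^⊥` match finite subgroups of `G` with open subgroups of `Ĝ`, and the
annihilator of `T_n(φ, F)` is `C_n(φ̂, F^⊥)`. For finite `T` we have `[Ĝ : T^⊥] = |T|`:
characters of `T` extend to `G` because the circle is divisible, and `T` has exactly `|T|`
characters. Hence `H_alg(φ, F) = H_top(φ̂, F^⊥)`. Conversely, an open subgroup `U` contains a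
basic neighbourhood of `1` for pointwise convergence, which constrains only finitely many points
of `G`; these generate a finite subgroup `F` since `G` is torsion, and `F^⊥ ≤ U` gives
`H_top(φ̂, U) ≤ H_alg(φ, F)`.
-/

open Filter Topology

noncomputable instance : DivisibleBy (Additive Circle) ℤ :=
  Function.Surjective.divisibleBy Circle.expHom
    (fun z => (Circle.exp_surjective z.toMul).imp fun _ h => congrArg Additive.ofMul h)
    (fun a n => map_zsmul Circle.expHom n a)

theorem Subgroup.exists_monoidHom_circle_comp_subtype {G : Type*} [CommGroup G]
    (T : Subgroup G) (χ : T →* Circle) : ∃ χ' : G →* Circle, χ'.comp T.subtype = χ := by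
  obtain ⟨χ', hχ'⟩ :=
    (Module.Baer.of_divisible (Additive Circle)).extension_property_addMonoidHom
      T.subtype.toAdditive (fun _ _ h => T.subtype_injective h) χ.toAdditive
  exact ⟨MonoidHom.toAdditive.symm χ', MonoidHom.toAdditive.injective hχ'⟩

theorem Nat.card_monoidHom_circle (H : Type*) [CommGroup H] [Finite H] :
    Nat.card (H →* Circle) = Nat.card H := by
  have := Fintype.ofFinite H
  calc Nat.card (H →* Circle)
      = Nat.card (AddChar (Additive H) ℂ) := Nat.card_congr <|
        (MulEquiv.monoidHomCongrLeftEquiv (MulEquiv.multiplicativeAdditive H)).symm.trans <|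
          AddChar.toMonoidHomEquiv.symm.trans AddChar.circleEquivComplex.toEquiv
    _ = Nat.card (Additive H) := by
        simp only [Nat.card_eq_fintype_card, AddChar.card_eq]
    _ = Nat.card H := rfl

theorem Subgroup.finite_closure_of_isMulTorsion {G : Type*} [CommGroup G] (hG : IsMulTorsion G)
    {S : Set G} (hS : S.Finite) : ((closure S : Subgroup G) : Set G).Finite := by
  have : Finite S := hS.to_subtype
  have : Finite (closure S) := CommGroup.finite_of_fg_isMulTorsion _ (hG.subgroup _)
  exact Set.toFinite _

namespace PontryaginDual

variable {G : Type*} [CommGroup G] [TopologicalSpace G]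

theorem isInducing_coeFn [DiscreteTopology G] :
    IsInducing fun χ : PontryaginDual G => (χ : G → Circle) :=
  ContinuousMap.isHomeomorph_coe.isInducing.comp
    (ContinuousMonoidHom.isInducing_toContinuousMap G Circle)

noncomputable def restrict (T : Subgroup G) : PontryaginDual G →* (T →* Circle) where
  toFun χ := (χ : G →* Circle).comp T.subtype
  map_one' := rfl
  map_mul' _ _ := rfl

theorem restrict_surjective [DiscreteTopology G] (T : Subgroup G) :
    Function.Surjective (restrict T) := fun χ =>
  let ⟨χ', h⟩ := T.exists_monoidHom_circle_comp_subtype χ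
  ⟨⟨χ', continuous_of_discreteTopology⟩, h⟩

noncomputable def annihilator (T : Subgroup G) : Subgroup (PontryaginDual G) := (restrict T).ker

theorem mem_annihilator {T : Subgroup G} {χ : PontryaginDual G} :
    χ ∈ annihilator T ↔ T ≤ (χ : G →* Circle).ker := by
  simp only [annihilator, MonoidHom.mem_ker, MonoidHom.ext_iff, SetLike.le_def]
  exact ⟨fun h g hg => h ⟨g, hg⟩, fun h g => h g.2⟩

theorem annihilator_iSup {ι : Sort*} (T : ι → Subgroup G) :
    annihilator (⨆ i, T i) = ⨅ i, annihilator (T i) := by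
  ext χ
  simp only [Subgroup.mem_iInf, mem_annihilator, iSup_le_iff]

theorem index_annihilator [DiscreteTopology G] (T : Subgroup G) [Finite T] :
    (annihilator T).index = Nat.card T := by
  rw [annihilator, Subgroup.index_ker, MonoidHom.range_eq_top_of_surjective _
    (restrict_surjective T), Subgroup.card_top, Nat.card_monoidHom_circle]

theorem isClosed_annihilator [DiscreteTopology G] (T : Subgroup G) :
    IsClosed (annihilator T : Set (PontryaginDual G)) := by
  have : (annihilator T : Set (PontryaginDual G)) =
      ⋂ g ∈ T, (fun χ : PontryaginDual G => χ g) ⁻¹' {1} := by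
    ext χ
    simp [mem_annihilator, SetLike.le_def]
  rw [this]
  exact isClosed_biInter fun g _ =>
    isClosed_singleton.preimage ((continuous_apply g).comp isInducing_coeFn.continuous)

theorem isOpen_annihilator [DiscreteTopology G] (T : Subgroup G) [Finite T] :
    IsOpen (annihilator T : Set (PontryaginDual G)) :=
  have : (annihilator T).FiniteIndex := ⟨index_annihilator T ▸ Nat.card_pos.ne'⟩
  (annihilator T).isOpen_of_isClosed_of_finiteIndex (isClosed_annihilator T)

theorem exists_finite_annihilator_le [DiscreteTopology G] (hG : IsMulTorsion G)
    (U : Subgroup (PontryaginDual G)) (hU : IsOpen (U : Set (PontryaginDual G))) :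
    ∃ T : Subgroup G, Finite T ∧ annihilator T ≤ U := by
  obtain ⟨V, hV, hVU⟩ := isInducing_coeFn.isOpen_iff.mp hU
  have hV1 : (1 : PontryaginDual G) ∈
      (fun χ : PontryaginDual G => (χ : G → Circle)) ⁻¹' V := hVU ▸ U.one_mem
  obtain ⟨I, W, hIW, hsub⟩ := isOpen_pi_iff.mp hV _ hV1
  refine ⟨Subgroup.closure I,
    (Subgroup.finite_closure_of_isMulTorsion hG I.finite_toSet).to_subtype, fun χ hχ => ?_⟩
  rw [← SetLike.mem_coe, ← hVU]
  refine hsub fun g hg => ?_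
  have : χ g = 1 := mem_annihilator.mp hχ (Subgroup.subset_closure hg)
  simpa [this] using (hIW g hg).2

end PontryaginDual

namespace Subgroup

variable {G : Type*} [Group G]

def trajectory (φ : Monoid.End G) (F : Subgroup G) (n : ℕ) : Subgroup G :=
  ⨆ i ∈ Finset.range n, F.map (φ ^ i : G →* G)

def cotrajectory (ψ : Monoid.End G) (U : Subgroup G) (n : ℕ) : Subgroup G :=
  ⨅ i ∈ Finset.range n, U.comap (ψ ^ i : G →* G)

theorem cotrajectory_mono (ψ : Monoid.End G) {U V : Subgroup G} (hUV : U ≤ V) (n : ℕ) :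
    cotrajectory ψ U n ≤ cotrajectory ψ V n :=
  iInf₂_mono fun _ _ => comap_mono hUV

end Subgroup

theorem Subgroup.finite_trajectory {G : Type*} [CommGroup G] (hG : IsMulTorsion G)
    (φ : Monoid.End G) (F : Subgroup G) [Finite F] (n : ℕ) : Finite (trajectory φ F n) := by
  have hS : (⋃ i ∈ Finset.range n, (φ ^ i : G →* G) '' F).Finite :=
    (Finset.range n).finite_toSet.biUnion fun i _ => (Set.toFinite (F : Set G)).image _
  have hle : trajectory φ F n ≤ closure (⋃ i ∈ Finset.range n, (φ ^ i : G →* G) '' F) :=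
    iSup₂_le fun i hi => map_le_iff_le_comap.mpr fun x hx =>
      subset_closure (Set.mem_biUnion hi ⟨x, hx, rfl⟩)
  exact ((finite_closure_of_isMulTorsion hG hS).subset hle).to_subtype

namespace PontryaginDual

open Subgroup

variable {G : Type*} [CommGroup G] [TopologicalSpace G] [DiscreteTopology G]

noncomputable def dualEnd (φ : Monoid.End G) : Monoid.End (PontryaginDual G) :=
  (PontryaginDual.map ⟨(φ : G →* G), continuous_of_discreteTopology⟩ :
    ContinuousMonoidHom (PontryaginDual G) (PontryaginDual G)).toMonoidHom

theorem dualEnd_pow (φ : Monoid.End G) (i : ℕ) : dualEnd φ ^ i = dualEnd (φ ^ i) := by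
  induction i with
  | zero => rfl
  | succ i ih => rw [pow_succ, pow_succ', ih]; rfl

theorem annihilator_map (f : Monoid.End G) (F : Subgroup G) :
    annihilator (F.map (f : G →* G)) = (annihilator F).comap (dualEnd f : _ →* _) := by
  ext χ
  exact mem_annihilator.trans <|
    map_le_iff_le_comap.trans (mem_annihilator (χ := dualEnd f χ)).symm

theorem annihilator_trajectory (φ : Monoid.End G) (F : Subgroup G) (n : ℕ) :
    annihilator (trajectory φ F n) = cotrajectory (dualEnd φ) (annihilator F) n := by
  simp only [trajectory, cotrajectory, annihilator_iSup, annihilator_map, dualEnd_pow]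

theorem index_cotrajectory_annihilator (hG : IsMulTorsion G) (φ : Monoid.End G)
    (F : Subgroup G) [Finite F] (n : ℕ) :
    (cotrajectory (dualEnd φ) (annihilator F) n).index = Nat.card (trajectory φ F n) := by
  have := finite_trajectory hG φ F n
  rw [← annihilator_trajectory, index_annihilator]

theorem log_index_cotrajectory_le (hG : IsMulTorsion G) (φ : Monoid.End G) {T : Subgroup G}
    [Finite T] {U : Subgroup (PontryaginDual G)} (hTU : annihilator T ≤ U) (n : ℕ) :
    Real.log (cotrajectory (dualEnd φ) U n).index ≤ Real.log (Nat.card (trajectory φ T n)) := by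
  have := finite_trajectory hG φ T n
  have : (cotrajectory (dualEnd φ) (annihilator T) n).FiniteIndex :=
    ⟨index_cotrajectory_annihilator hG φ T n ▸ Nat.card_pos.ne'⟩
  have hle := cotrajectory_mono (dualEnd φ) hTU n
  have : (cotrajectory (dualEnd φ) U n).FiniteIndex := finiteIndex_of_le hle
  gcongr
  · exact_mod_cast FiniteIndex.index_ne_zero.bot_lt
  · exact index_cotrajectory_annihilator hG φ T n ▸ index_antitone hle

end PontryaginDual

open PontryaginDual Subgroup in
/-- Weiss Bridge Theorem: `G` a (discrete) torsion abelian group,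
`φ : G → G` an endomorphism, `K = Ĝ` the Pontryagin dual, `ψ = φ̂` the dual endomorphism.
Then `h_alg(φ) = h_top(ψ)`, where `h_alg(φ)` is the sup over finite subgroups `F` of
`H_alg(φ,F) = lim_n log|T_n(φ,F)|/n` and `h_top(ψ)` is the sup over open subgroups `U` of
`H_top(ψ,U) = lim_n log[K : C_n(ψ,U)]/n`. -/
theorem statement17 {G : Type*} [CommGroup G] [TopologicalSpace G] [DiscreteTopology G]
    (hTor : Monoid.IsTorsion G)
    (φ : Monoid.End G)
    (ψ : Monoid.End (PontryaginDual G))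
    (hψ : ψ = (PontryaginDual.map ⟨(φ : G →* G), continuous_of_discreteTopology⟩ :
      ContinuousMonoidHom (PontryaginDual G) (PontryaginDual G)).toMonoidHom)
    (Halg : Subgroup G → ℝ)
    (hHalg : ∀ F : Subgroup G, (F : Set G).Finite →
      Tendsto
        (fun n : ℕ =>
          Real.log (Nat.card (⨆ i ∈ Finset.range n, F.map (φ ^ i : G →* G) : Subgroup G)) / n)
        atTop (𝓝 (Halg F)))
    (Htop : Subgroup (PontryaginDual G) → ℝ)
    (hHtop : ∀ U : Subgroup (PontryaginDual G), IsOpen (U : Set (PontryaginDual G)) →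
      Tendsto
        (fun n : ℕ =>
          Real.log ((⨅ i ∈ Finset.range n, U.comap (ψ ^ i : _ →* _) :
            Subgroup (PontryaginDual G)).index) / n)
        atTop (𝓝 (Htop U))) :
    (⨆ (F : Subgroup G) (_ : (F : Set G).Finite), ENNReal.ofReal (Halg F)) =
      ⨆ (U : Subgroup (PontryaginDual G)) (_ : IsOpen (U : Set (PontryaginDual G))),
        ENNReal.ofReal (Htop U) := by
  replace hψ : ψ = dualEnd φ := hψ
  subst hψ
  have hAlg (F : Subgroup G) [Finite F] : Tendsto
      (fun n : ℕ => Real.log (Nat.card (trajectory φ F n)) / n) atTop (𝓝 (Halg F)) :=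
    hHalg F (Set.toFinite _)
  have hTop (U : Subgroup (PontryaginDual G)) (hU : IsOpen (U : Set (PontryaginDual G))) :
      Tendsto (fun n : ℕ => Real.log (cotrajectory (dualEnd φ) U n).index / n) atTop
        (𝓝 (Htop U)) :=
    hHtop U hU
  have hEq (F : Subgroup G) [Finite F] : Halg F = Htop (annihilator F) := by
    refine tendsto_nhds_unique (hAlg F) ?_
    simpa only [index_cotrajectory_annihilator hTor] using hTop _ (isOpen_annihilator F)
  refine le_antisymm (iSup₂_mono' fun F hF => ?_) (iSup₂_mono' fun U hU => ?_)
  · have : Finite F := hF.to_subtype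
    exact ⟨annihilator F, isOpen_annihilator F, (congrArg ENNReal.ofReal (hEq F)).le⟩
  · obtain ⟨F, hF, hFU⟩ := exists_finite_annihilator_le hTor U hU
    exact ⟨F, Set.toFinite _, ENNReal.ofReal_le_ofReal <|
      le_of_tendsto_of_tendsto' (hTop U hU) (hAlg F) fun n =>
        div_le_div_of_nonneg_right (log_index_cotrajectory_le hTor φ hFU n) n.cast_nonneg⟩
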